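/- For every integer n ≥ 1, S_{P_n}(2√2) = 1 if n is odd and S_{P_n}(2√2) = 0 if n is even (Rule A). -/

import Mathlib

/-!
Put `α = 2√2`, `N = P n` and `H = H n`, so that `√2 N = H - (1 - √2) ^ n`. Then `N α` lies within
`2 (√2 - 1) ^ n < 1` of the even integer `2H`, above it for odd `n` and below it for even `n`.
No `j α` with `0 < j < N`, `2j ≠ N`, comes that close to an integer `k`: otherwise `k² - 8j²` is a
nonzero integer of absolute value less than `4`, hence `1` by a computation modulo `8`, and
`(k, 2j)` is an earlier Pell pair `(H m, P m)` whose error `(√2 - 1) ^ m` is too large.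
Hence `⌊jα⌋ + ⌊(N - j)α⌋ = 2H - 1` is odd, the steps `j` and `N - j` of the walk cancel, and
`S_N` is the last step `(-1)^⌊Nα⌋ = -(-1)^n` plus, for even `n`, the middle step
`(-1)^⌊(N/2)α⌋ = (-1)^(H - 1) = 1`.
-/

/-- The deterministic random walk `S_n(ξ) = ∑_{j=1}^n (-1)^⌊j·ξ⌋`. -/
noncomputable def S (ξ : ℝ) (n : ℕ) : ℤ :=
  ∑ j ∈ Finset.Icc 1 n, ((Int.negOnePow ⌊(j : ℝ) * ξ⌋ : ℤˣ) : ℤ)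

/-- The Pell numbers: `P 0 = 0`, `P 1 = 1`, `P (n+2) = 2·P (n+1) + P n`. -/
def pell : ℕ → ℕ
  | 0 => 0
  | 1 => 1
  | n + 2 => 2 * pell (n + 1) + pell n

open Finset Real

lemma Int.floor_add_floor_eq_sub_one {α : Type*} [Field α] [LinearOrder α] [IsStrictOrderedRing α]
    [FloorRing α] {x y : α} {c : ℤ} (h : ∀ k : ℤ, |x + y - c| < |x - k|) :
    ⌊x⌋ + ⌊y⌋ = c - 1 := by
  have hx0 := Int.floor_le x
  have hx1 := Int.lt_floor_add_one x
  have hy0 := Int.floor_le y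
  have hy1 := Int.lt_floor_add_one y
  have h0 := h ⌊x⌋
  have h1 := h (⌊x⌋ + 1)
  rw [abs_of_nonneg (sub_nonneg.2 hx0)] at h0
  rw [Int.cast_add, Int.cast_one, abs_of_neg (sub_neg.2 hx1)] at h1
  have hlt : ((⌊x⌋ + ⌊y⌋ : ℤ) : α) < c := by
    push_cast; linarith [le_abs_self (x + y - c)]
  have hgt : ((c - 2 : ℤ) : α) < (⌊x⌋ + ⌊y⌋ : ℤ) := by
    push_cast; linarith [neg_abs_le (x + y - c)]
  have := Int.cast_lt.1 hlt
  have := Int.cast_lt.1 hgt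
  omega

lemma Int.negOnePow_add_negOnePow_of_odd {a b : ℤ} (h : Odd (a + b)) :
    (a.negOnePow : ℤ) + (b.negOnePow : ℤ) = 0 := by
  rcases Int.even_or_odd a with ha | ha
  · rw [Int.negOnePow_even a ha, Int.negOnePow_odd b (by simpa [Int.odd_add', ha] using h)]
    rfl
  · rw [Int.negOnePow_odd a ha, Int.negOnePow_even b (by simpa [Int.odd_add, ha] using h)]
    rfl

lemma sum_Ioo_eq_sum_filter_of_add_reflect {M : Type*} [AddCommMonoid M] {f : ℕ → M} {N : ℕ}
    (h : ∀ j, 0 < j → j < N → 2 * j ≠ N → f j + f (N - j) = 0) :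
    ∑ j ∈ Ioo 0 N, f j = ∑ j ∈ Ioo 0 N with 2 * j = N, f j := by
  have hfixed : ∑ j ∈ Ioo 0 N with ¬2 * j = N, f j = 0 := by
    refine sum_involution (fun j _ => N - j) (fun j hj => ?_) (fun j hj _ => ?_) (fun j hj => ?_)
      (fun j hj => ?_) <;> simp only [mem_filter, mem_Ioo] at hj ⊢
    exacts [h j hj.1.1 hj.1.2 hj.2, by omega, by omega, by omega]
  rw [← sum_filter_add_sum_filter_not (Ioo 0 N) (fun j => 2 * j = N), hfixed, add_zero]

lemma S_eq_sum_Ioo_add {ξ : ℝ} {N : ℕ} (hN : 0 < N) :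
    S ξ N = ∑ j ∈ Ioo 0 N, ((Int.negOnePow ⌊(j : ℝ) * ξ⌋ : ℤˣ) : ℤ) +
      Int.negOnePow ⌊(N : ℝ) * ξ⌋ := by
  rw [S, ← zero_add 1, Icc_add_one_left_eq_Ioc, ← Ioo_insert_right hN,
    sum_insert right_notMem_Ioo, add_comm]

/-- `H n`, half the companion Pell number, so that `H n + P n √2 = (1 + √2) ^ n`. -/
def halfCompanionPell : ℕ → ℕ
  | 0 => 1
  | n + 1 => halfCompanionPell n + 2 * pell n

local notation "H" => halfCompanionPell

lemma pell_succ_eq_halfCompanionPell_add (n : ℕ) : pell (n + 1) = H n + pell n := by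
  induction n with
  | zero => rfl
  | succ n ih =>
    change 2 * pell (n + 1) + pell n = H n + 2 * pell n + pell (n + 1)
    omega

lemma pell_mono : Monotone pell := by
  refine monotone_nat_of_le_succ fun n => ?_
  rw [pell_succ_eq_halfCompanionPell_add]
  exact Nat.le_add_left _ _

lemma pell_pos {n : ℕ} (hn : 1 ≤ n) : 0 < pell n :=
  pell_mono hn

lemma two_mul_pell_le_pell_succ (n : ℕ) : 2 * pell n ≤ pell (n + 1) := by
  cases n with
  | zero => exact Nat.zero_le _
  | succ n => exact Nat.le_add_right _ _

lemma odd_halfCompanionPell (n : ℕ) : Odd (H n) := by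
  induction n with
  | zero => exact odd_one
  | succ n ih => exact ih.add_even (even_two_mul _)

lemma even_pell_iff {n : ℕ} : Even (pell n) ↔ Even n := by
  induction n with
  | zero => simp [pell]
  | succ n ih =>
    rw [pell_succ_eq_halfCompanionPell_add, Nat.even_add, Nat.even_add_one, ← ih]
    simp [Nat.not_even_iff_odd.2 (odd_halfCompanionPell n)]

lemma halfCompanionPell_add_mul_pell {R : Type*} [CommRing R] {s : R} (hs : s ^ 2 = 2) (n : ℕ) :
    (H n : R) + s * pell n = (1 + s) ^ n := by
  induction n with
  | zero => simp [halfCompanionPell, pell]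
  | succ n ih =>
    rw [pow_succ, ← ih, pell_succ_eq_halfCompanionPell_add, halfCompanionPell]
    push_cast
    linear_combination -(pell n : R) * hs

lemma exists_eq_halfCompanionPell_pell {x y : ℕ}
    (h : x ^ 2 = 2 * y ^ 2 + 1 ∨ x ^ 2 + 1 = 2 * y ^ 2) : ∃ m, x = H m ∧ y = pell m := by
  induction y using Nat.strong_induction_on generalizing x with
  | _ y ih =>
  rcases Nat.eq_zero_or_pos y with rfl | hy
  · refine ⟨0, ?_, rfl⟩
    rcases h with h | h <;> simp_all [halfCompanionPell]
  -- descent: `(x, y) = (a + 2b, a + b)` where `(a, b)` solves the equation with the other sign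
  have hyx : y ≤ x := by rcases h with h | h <;> nlinarith
  have hx2y : x < 2 * y := by rcases h with h | h <;> nlinarith
  obtain ⟨b, rfl⟩ := Nat.exists_eq_add_of_le hyx
  obtain ⟨a, rfl⟩ := Nat.exists_eq_add_of_le (show b ≤ y by omega)
  obtain ⟨m, rfl, rfl⟩ := ih b (by omega) (x := a)
    (by rcases h with h | h <;> [right; left] <;> nlinarith)
  exact ⟨m + 1, by rw [halfCompanionPell]; ring, by rw [pell_succ_eq_halfCompanionPell_add]; ring⟩

lemma halfCompanionPell_add_sqrt_two_mul_pell (n : ℕ) : (H n : ℝ) + √2 * pell n = (1 + √2) ^ n :=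
  halfCompanionPell_add_mul_pell (by simp) n

lemma sqrt_two_mul_pell (n : ℕ) : √2 * pell n = H n - (1 - √2) ^ n := by
  have h := halfCompanionPell_add_mul_pell (s := -√2) (by simp) n
  rw [← sub_eq_add_neg] at h
  linear_combination -h

lemma abs_one_sub_sqrt_two : |1 - √2| = √2 - 1 := by
  rw [abs_sub_comm, abs_of_pos (by linarith [one_lt_sqrt_two])]

lemma abs_one_sub_sqrt_two_pow_lt {n : ℕ} (hn : n ≠ 0) : |(1 - √2) ^ n| < 1 / 2 := by
  have h1 := one_lt_sqrt_two
  have h2 := sqrt_two_lt_three_halves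
  rw [abs_pow, abs_one_sub_sqrt_two]
  calc (√2 - 1) ^ n ≤ √2 - 1 := pow_le_of_le_one (by linarith) (by linarith) hn
    _ < 1 / 2 := by linarith

lemma floor_pell_mul_of_odd {n : ℕ} (ho : Odd n) :
    ⌊(pell n : ℝ) * (2 * √2)⌋ = 2 * H n := by
  have hv := abs_lt.1 (abs_one_sub_sqrt_two_pow_lt ho.pos.ne')
  have hneg : (1 - √2) ^ n < 0 := ho.pow_neg (by linarith [one_lt_sqrt_two])
  have := sqrt_two_mul_pell n
  rw [Int.floor_eq_iff]
  push_cast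
  constructor <;> linarith

lemma floor_pell_mul_of_even {n : ℕ} (he : Even n) (hn : n ≠ 0) :
    ⌊(pell n : ℝ) * (2 * √2)⌋ = 2 * H n - 1 := by
  have hv := abs_lt.1 (abs_one_sub_sqrt_two_pow_lt hn)
  have hpos : 0 < (1 - √2) ^ n := he.pow_pos (by linarith [one_lt_sqrt_two])
  have := sqrt_two_mul_pell n
  rw [Int.floor_eq_iff]
  push_cast
  constructor <;> linarith

lemma floor_half_pell_mul {n : ℕ} (he : Even n) (hn : n ≠ 0) :
    ⌊((pell n / 2 : ℕ) : ℝ) * (2 * √2)⌋ = H n - 1 := by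
  have hv := abs_lt.1 (abs_one_sub_sqrt_two_pow_lt hn)
  have hpos : 0 < (1 - √2) ^ n := he.pow_pos (by linarith [one_lt_sqrt_two])
  obtain ⟨M, hM⟩ := even_pell_iff.2 he
  have := sqrt_two_mul_pell n
  rw [hM, show (M + M) / 2 = M by omega] at *
  rw [Int.floor_eq_iff]
  push_cast at *
  constructor <;> linarith

lemma sq_eq_eight_mul_sq_add_one {k j : ℤ} (hne : k ^ 2 ≠ 8 * j ^ 2)
    (hlt : |k ^ 2 - 8 * j ^ 2| < 4) : k ^ 2 = 8 * j ^ 2 + 1 := by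
  have := abs_lt.1 hlt
  obtain ⟨t, rfl | rfl⟩ := Int.even_or_odd' k
  · rw [mul_pow] at *
    omega
  · obtain ⟨r, hr⟩ := Int.even_mul_succ_self t
    have : (2 * t + 1) ^ 2 = 8 * r + 1 := by linear_combination 4 * hr
    omega

lemma pos_and_sq_eq_eight_mul_sq_add_one_of_abs_sub_le {n j : ℕ} {k : ℤ} (hj : 0 < j)
    (hjn : j < pell n) (hclose : |(j : ℝ) * (2 * √2) - k| ≤ 2 * |(1 - √2) ^ n|) :
    0 < k ∧ k ^ 2 = 8 * j ^ 2 + 1 := by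
  have hn : n ≠ 0 := by rintro rfl; simp [pell] at hjn
  have hs := one_lt_sqrt_two
  have hs2 : √2 ^ 2 = 2 := sq_sqrt zero_le_two
  have hw := abs_one_sub_sqrt_two_pow_lt hn
  have hv := neg_abs_le ((1 - √2) ^ n)
  rw [abs_pow, abs_one_sub_sqrt_two] at hclose hw hv
  set w := (√2 - 1) ^ n
  have hw0 : 0 < w := pow_pos (by linarith) n
  have huw : (1 + √2) ^ n * w = 1 := by
    rw [← mul_pow, show (1 + √2) * (√2 - 1) = 1 by linear_combination hs2, one_pow]
  have hjR : ((j : ℝ) + 1) * (2 * √2) ≤ pell n * (2 * √2) := by gcongr; exact_mod_cast hjn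
  have hjR0 : (1 : ℝ) ≤ j := by exact_mod_cast hj
  have hx : (j : ℝ) * (2 * √2) ≤ (1 + √2) ^ n + w - 2 * √2 := by
    linarith [sqrt_two_mul_pell n, halfCompanionPell_add_sqrt_two_mul_pell n]
  obtain ⟨hlo, hhi⟩ := abs_le.1 hclose
  have hkR : (0 : ℝ) < k := by nlinarith
  have hxk : 0 < (j : ℝ) * (2 * √2) + k := by positivity
  have hprod :
      (k : ℝ) ^ 2 - 8 * j ^ 2 = -(((j : ℝ) * (2 * √2) - k) * ((j : ℝ) * (2 * √2) + k)) := by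
    linear_combination (4 * (j : ℝ) ^ 2) * hs2
  refine ⟨by exact_mod_cast hkR, sq_eq_eight_mul_sq_add_one ?_ ?_⟩
  · intro h
    have hirr : Irrational ((j : ℝ) * (2 * √2)) := by
      have := irrational_sqrt_two.natCast_mul (m := 2 * j) (by omega)
      push_cast at this
      rwa [← mul_assoc, mul_comm (j : ℝ) 2]
    have h' : ((k : ℝ) ^ 2 - 8 * j ^ 2) = 0 := by exact_mod_cast sub_eq_zero.2 h
    rw [hprod, neg_eq_zero] at h'
    exact hirr.ne_int k (sub_eq_zero.1 ((mul_eq_zero.1 h').resolve_right hxk.ne'))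
  · have : |(k : ℝ) ^ 2 - 8 * j ^ 2| < 4 := by
      rw [hprod, abs_neg, abs_mul, abs_of_pos hxk]
      calc |(j : ℝ) * (2 * √2) - k| * ((j : ℝ) * (2 * √2) + k)
          ≤ 2 * w * (2 * ((1 + √2) ^ n + w - 2 * √2) + 2 * w) :=
            mul_le_mul hclose (by linarith) hxk.le (by positivity)
        _ = 4 - 8 * w * (√2 - w) := by linear_combination 4 * huw
        _ < 4 := by nlinarith
    exact_mod_cast this

lemma abs_pell_mul_sub_lt {n j : ℕ} (hj : 0 < j) (hjn : j < pell n) (h2j : 2 * j ≠ pell n) (k : ℤ) :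
    |(pell n : ℝ) * (2 * √2) - 2 * H n| < |(j : ℝ) * (2 * √2) - k| := by
  have hδ : |(pell n : ℝ) * (2 * √2) - 2 * H n| = 2 * |(1 - √2) ^ n| := by
    rw [show (pell n : ℝ) * (2 * √2) - 2 * H n = -2 * (1 - √2) ^ n by
      linarith [sqrt_two_mul_pell n], abs_mul]
    norm_num
  rw [hδ]
  -- A closer approximation would make `(k, 2j)` an earlier Pell pair `(H m, P m)`, whose
  -- approximation error `(√2 - 1) ^ m` is more than twice `(√2 - 1) ^ n`.
  by_contra! hclose
  obtain ⟨hk, hkj⟩ := pos_and_sq_eq_eight_mul_sq_add_one_of_abs_sub_le hj hjn hclose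
  lift k to ℕ using hk.le
  obtain ⟨m, rfl, hm⟩ := exists_eq_halfCompanionPell_pell (x := k) (y := 2 * j)
    (Or.inl (by zify; linear_combination hkj))
  have hmn : m < n := by
    have : m < n + 1 := pell_mono.reflect_lt (by have := two_mul_pell_le_pell_succ n; omega)
    exact lt_of_le_of_ne (by omega) (by rintro rfl; exact h2j hm)
  have hjm : (j : ℝ) * (2 * √2) - H m = -(1 - √2) ^ m := by
    have := sqrt_two_mul_pell m
    rw [← hm] at this
    push_cast at this
    linarith
  push_cast at hclose
  rw [hjm, abs_neg, abs_pow, abs_pow, abs_one_sub_sqrt_two] at hclose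
  have hs := one_lt_sqrt_two
  have hs' := sqrt_two_lt_three_halves
  have h1 : (√2 - 1) ^ n ≤ (√2 - 1) ^ (m + 1) :=
    pow_le_pow_of_le_one (by linarith) (by linarith) hmn
  have h2 : 0 < (√2 - 1) ^ m := pow_pos (by linarith) m
  rw [pow_succ] at h1
  nlinarith

lemma negOnePow_floor_add_negOnePow_floor_pell_sub {n j : ℕ} (hj : 0 < j) (hjn : j < pell n)
    (h2j : 2 * j ≠ pell n) :
    (⌊(j : ℝ) * (2 * √2)⌋.negOnePow : ℤ) + ⌊((pell n - j : ℕ) : ℝ) * (2 * √2)⌋.negOnePow = 0 := by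
  apply Int.negOnePow_add_negOnePow_of_odd
  rw [Int.floor_add_floor_eq_sub_one (c := 2 * H n) fun k => ?_]
  · exact ⟨H n - 1, by ring⟩
  · have hsum : (j : ℝ) * (2 * √2) + ((pell n - j : ℕ) : ℝ) * (2 * √2) - ((2 * H n : ℤ) : ℝ) =
        pell n * (2 * √2) - 2 * H n := by
      push_cast [Nat.cast_sub hjn.le]
      ring
    exact hsum ▸ abs_pell_mul_sub_lt hj hjn h2j k

/-- Rule A. -/
theorem stmt_8 (n : ℕ) (hn : 1 ≤ n) :
    (Odd n → S (2 * Real.sqrt 2) (pell n) = 1) ∧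
    (Even n → S (2 * Real.sqrt 2) (pell n) = 0) := by
  rw [S_eq_sum_Ioo_add (pell_pos hn), sum_Ioo_eq_sum_filter_of_add_reflect
    (f := fun j : ℕ => (⌊(j : ℝ) * (2 * √2)⌋.negOnePow : ℤ))
    fun j hj hjn h2j => negOnePow_floor_add_negOnePow_floor_pell_sub hj hjn h2j]
  refine ⟨fun ho => ?_, fun he => ?_⟩
  · have hodd : ¬Even (pell n) := even_pell_iff.not.2 (Nat.not_even_iff_odd.2 ho)
    have hempty : {j ∈ Ioo 0 (pell n) | 2 * j = pell n} = ∅ :=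
      filter_eq_empty_iff.2 fun j _ h => hodd ⟨j, by omega⟩
    rw [hempty, sum_empty, floor_pell_mul_of_odd ho, Int.negOnePow_even _ (even_two_mul _)]
    rfl
  · obtain ⟨M, hM⟩ := even_pell_iff.2 he
    have hN := pell_pos hn
    have hmid : {j ∈ Ioo 0 (pell n) | 2 * j = pell n} = {pell n / 2} := by
      ext j
      simp only [mem_filter, mem_Ioo, mem_singleton]
      omega
    obtain ⟨c, hc⟩ := odd_halfCompanionPell n
    rw [hmid, sum_singleton, floor_half_pell_mul he (by omega),
      floor_pell_mul_of_even he (by omega), Int.negOnePow_even _ ⟨c, by omega⟩,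
      Int.negOnePow_odd _ ⟨H n - 1, by ring⟩]
    rfl
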